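/- Let M ≥ 3 be an integer and let M̂ be the (M−2)×(M−2) tridiagonal matrix with zero diagonal, superdiagonal entries M̂_{i,i+1} = i + 2 for i = 1, ..., M−3, and subdiagonal entries M̂_{i+1,i} = 1. If λ is a real root of Ĥe_{M−2}, then the vector v ∈ ℝ^{M−2} with entries v_i = Ĥe_{i−1}(λ)/(i+1)! for i = 1, ..., M−2 satisfies M̂·v = λ·v; in particular, every root of Ĥe_{M−2} is an eigenvalue of M̂. -/

import Mathlib

/-! The three-term recurrence of `Ĥe` is exactly the eigenvalue equation of `M̂` once `Ĥe_k(λ)` is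
rescaled by `1/(k+2)!`: the superdiagonal entry `i + 3` cancels the extra factor of `(i+3)!`, and
the subdiagonal entry `1` picks up the factor `i + 2` of `(i+2)!/(i+1)!`. The last row has no
superdiagonal term, which is harmless because `Ĥe_{M-2}(λ) = 0`. -/

open Polynomial Matrix

/-- Modified Hermite-type polynomials: Ĥe₀ = 1, Ĥe₁ = x,
    Ĥe_{k+1} = x·Ĥe_k − (k+2)·Ĥe_{k−1} for k ≥ 1. -/
noncomputable def Hhat : ℕ → Polynomial ℝ
  | 0 => 1
  | 1 => Polynomial.X
  | (n + 2) => Polynomial.X * Hhat (n + 1) - Polynomial.C ((n : ℝ) + 3) * Hhat n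

/-- The (M−2)×(M−2) tridiagonal matrix M̂ with zero diagonal, superdiagonal
    entries 3, 4, ..., M−1 and subdiagonal entries 1. -/
def triMhat (M : ℕ) : Matrix (Fin (M - 2)) (Fin (M - 2)) ℝ :=
  Matrix.of fun i j =>
    if (j : ℕ) = (i : ℕ) + 1 then ((i : ℕ) : ℝ) + 3
    else if (i : ℕ) = (j : ℕ) + 1 then 1 else 0

lemma Hhat_eval_add_two (n : ℕ) (x : ℝ) :
    (Hhat (n + 2)).eval x = x * (Hhat (n + 1)).eval x - ((n : ℝ) + 3) * (Hhat n).eval x := by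
  simp [Hhat]

lemma triMhat_mulVec_apply (M : ℕ) (w : ℕ → ℝ) (i : Fin (M - 2)) :
    (triMhat M).mulVec (fun j => w j) i =
      (if (i : ℕ) + 1 < M - 2 then ((i : ℕ) + 3) * w (i + 1) else 0) +
        if (i : ℕ) = 0 then 0 else w (i - 1) := by
  have hsplit : ∀ j : ℕ, (if j = (i : ℕ) + 1 then ((i : ℕ) : ℝ) + 3
      else if (i : ℕ) = j + 1 then 1 else 0) * w j =
      (if (i : ℕ) + 1 = j then ((i : ℕ) + 3) * w j else 0) +
        if (i : ℕ) = 0 then 0 else if (i : ℕ) - 1 = j then w j else 0 := by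
    intro j
    split_ifs <;> first | omega | simp_all
  simp only [mulVec, dotProduct, triMhat, of_apply]
  rw [Fin.sum_univ_eq_sum_range (fun j => (if j = (i : ℕ) + 1 then ((i : ℕ) : ℝ) + 3
      else if (i : ℕ) = j + 1 then 1 else 0) * w j), Finset.sum_congr rfl fun j _ => hsplit j,
    Finset.sum_add_distrib, Finset.sum_ite_eq]
  by_cases hi : (i : ℕ) = 0
  · simp [hi]
  · have hpred : (i : ℕ) - 1 < M - 2 := by omega
    simp [hi, hpred]

noncomputable def HhatScaled (x : ℝ) (k : ℕ) : ℝ :=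
  (Hhat k).eval x / (Nat.factorial (k + 2) : ℝ)

lemma HhatScaled_three_term (x : ℝ) (i : ℕ) :
    ((i : ℝ) + 3) * HhatScaled x (i + 1) + (if i = 0 then 0 else HhatScaled x (i - 1)) =
      x * HhatScaled x i := by
  rcases i with _ | k
  · simp [HhatScaled, Hhat, Nat.factorial]
    ring
  · simp only [HhatScaled, Nat.add_sub_cancel, add_eq_zero, one_ne_zero, and_false, if_false,
      Hhat_eval_add_two, Nat.factorial_succ (k + 1 + 2), Nat.factorial_succ (k + 2)]
    push_cast
    field_simp
    ring

theorem eigenvector_triMhat_general (M : ℕ) (lam : ℝ)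
    (hroot : (Hhat (M - 2)).eval lam = 0) :
    (triMhat M).mulVec
        (fun i => (Hhat (i : ℕ)).eval lam / (Nat.factorial ((i : ℕ) + 2) : ℝ))
      = lam • (fun i : Fin (M - 2) =>
          (Hhat (i : ℕ)).eval lam / (Nat.factorial ((i : ℕ) + 2) : ℝ)) := by
  funext i
  have hlast : HhatScaled lam (M - 2) = 0 := by simp [HhatScaled, hroot]
  have hsuper : (if (i : ℕ) + 1 < M - 2 then ((i : ℕ) + 3) * HhatScaled lam (i + 1) else 0) =
      ((i : ℕ) + 3) * HhatScaled lam (i + 1) := by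
    split_ifs with h
    · rfl
    · rw [show (i : ℕ) + 1 = M - 2 by omega, hlast, mul_zero]
  have hrow := triMhat_mulVec_apply M (HhatScaled lam) i
  rw [hsuper, HhatScaled_three_term] at hrow
  exact hrow

/-- If λ is a root of Ĥe_{M−2} then v with vᵢ = Ĥe_{i−1}(λ)/(i+1)! (1-based)
    is an eigenvector of M̂ with eigenvalue λ. -/
theorem eigenvector_triMhat (M : ℕ) (hM : 3 ≤ M) (lam : ℝ)
    (hroot : (Hhat (M - 2)).eval lam = 0) :
    (triMhat M).mulVec
        (fun i => (Hhat (i : ℕ)).eval lam / (Nat.factorial ((i : ℕ) + 2) : ℝ))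
      = lam • (fun i : Fin (M - 2) =>
          (Hhat (i : ℕ)).eval lam / (Nat.factorial ((i : ℕ) + 2) : ℝ)) :=
  eigenvector_triMhat_general M lam hroot
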